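/- Let V be a nonnegative random variable with distribution function F_V and let Y ~ PH(π,T) be a phase-type distributed random variable independent of V. If F_V is long-tailed (F_V ∈ L), then the distribution F_{VY} of the product VY is also long-tailed. -/

import Mathlib

/-! Write `F̄` for the tail of `V` and `ν` for the law of `Y`. Since `Y > 0`,
`P(VY > z) = ∫ F̄(z/t) dν(t)`. For a fixed shift `y`, split the `t`-range at `σ` and `x/x₀`:
for `σ < t ≤ x/x₀` long-tailedness gives `F̄((x-y)/t) ≤ (1+ε) F̄(x/t)` uniformly; the range
`(0, σ]` has small `ν`-mass, and `(x/x₀, ∞)` has `ν`-mass `O(e^{-λx/x₀})`. Both errors are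
negligible against the lower bound `P(VY > x) ≥ F̄(x/m) ν(m, ∞)`, the second because a
long-tailed tail decays more slowly than every exponential.

The exponential tail of PH(π,T) comes from `exp(sT)` being entrywise nonnegative with row sums
at most one: the row sums decrease to a vector `w` fixed by the semigroup, so `T w = 0`, and
`w = 0` because `T` is nonsingular. -/

open MeasureTheory ProbabilityTheory Filter Matrix Set
open scoped Topology ENNReal

noncomputable section

/-- A phase-type representation `(π, T)` of dimension `p`: `π` is a probability vector,
`T` has nonnegative off-diagonal entries, nonpositive row sums, and all eigenvalues of
strictly negative real part. -/
structure IsPHRepr {p : ℕ} (piv : Fin p → ℝ) (T : Matrix (Fin p) (Fin p) ℝ) : Prop where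
  pi_nonneg : ∀ i, 0 ≤ piv i
  pi_sum_one : ∑ i, piv i = 1
  offdiag_nonneg : ∀ i j, i ≠ j → 0 ≤ T i j
  rowsum_nonpos : ∀ i, ∑ j, T i j ≤ 0
  eig_neg : ∀ z ∈ spectrum ℂ (T.map (algebraMap ℝ ℂ)), z.re < 0

/-- Survival function `π exp(T y) e` of PH(π,T). -/
def phSurv {p : ℕ} (piv : Fin p → ℝ) (T : Matrix (Fin p) (Fin p) ℝ) (y : ℝ) : ℝ :=
  ∑ i, ∑ j, piv i * NormedSpace.exp (y • T) i j

/-- Density `π exp(T y) t`, with `t = -T e`, of PH(π,T). -/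
def phDens {p : ℕ} (piv : Fin p → ℝ) (T : Matrix (Fin p) (Fin p) ℝ) (y : ℝ) : ℝ :=
  ∑ i, ∑ j, piv i * NormedSpace.exp (y • T) i j * (-∑ k, T j k)

/-- The phase-type distribution PH(π,T): the measure on (0,∞) with Lebesgue density `phDens`. -/
def phMeasure {p : ℕ} (piv : Fin p → ℝ) (T : Matrix (Fin p) (Fin p) ℝ) : Measure ℝ :=
  volume.withDensity fun y => if 0 < y then ENNReal.ofReal (phDens piv T y) else 0

/-- The law `μ` is regularly varying with index `-α`: the tail is eventually positive and
`μ(λx,∞)/μ(x,∞) → λ^{-α}` as `x → ∞` for every `λ > 0`. -/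
def RegVary (μ : Measure ℝ) (α : ℝ) : Prop :=
  (∀ᶠ x in atTop, 0 < μ (Set.Ioi x)) ∧
  ∀ l : ℝ, 0 < l →
    Tendsto (fun x => (μ (Set.Ioi (l * x))).toReal / (μ (Set.Ioi x)).toReal) atTop
      (𝓝 (l ^ (-α)))

/-- Subexponentiality of the law `μ`: positive tail and `(1 - F*F(x))/(1 - F(x)) → 2`. -/
def Subexponential (μ : Measure ℝ) : Prop :=
  (∀ x : ℝ, 0 < μ (Set.Ioi x)) ∧
  Tendsto (fun x => ((μ.conv μ) (Set.Ioi x)).toReal / (μ (Set.Ioi x)).toReal) atTop (𝓝 2)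

/-- The class 𝒜: subexponential laws with `limsup F̄(cx)/F̄(x) < 1` for some `c > 1`. -/
def ClassA (μ : Measure ℝ) : Prop :=
  Subexponential μ ∧ ∃ c : ℝ, 1 < c ∧
    Filter.limsup (fun x => (μ (Set.Ioi (c * x))).toReal / (μ (Set.Ioi x)).toReal) atTop < 1

/-- Extended regular variation: `liminf F̄(λx)/F̄(x) ≥ λ^{-φ}` for some `φ ≥ 0`, all `λ ≥ 1`. -/
def ExtRegVary (μ : Measure ℝ) : Prop :=
  ∃ φ : ℝ, 0 ≤ φ ∧ ∀ l : ℝ, 1 ≤ l →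
    l ^ (-φ) ≤
      Filter.liminf (fun x => (μ (Set.Ioi (l * x))).toReal / (μ (Set.Ioi x)).toReal) atTop

/-- Intermediate regular variation: `lim_{λ↓1} liminf_{x→∞} F̄(λx)/F̄(x) = 1`. -/
def IntRegVary (μ : Measure ℝ) : Prop :=
  Tendsto
    (fun l : ℝ =>
      Filter.liminf (fun x => (μ (Set.Ioi (l * x))).toReal / (μ (Set.Ioi x)).toReal) atTop)
    (𝓝[>] (1 : ℝ)) (𝓝 1)

/-- Dominated variation: `liminf F̄(λx)/F̄(x) > 0` for some `λ > 1`. -/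
def DomVary (μ : Measure ℝ) : Prop :=
  ∃ l : ℝ, 1 < l ∧
    0 < Filter.liminf (fun x => (μ (Set.Ioi (l * x))).toReal / (μ (Set.Ioi x)).toReal) atTop

/-- Long-tailed laws: positive tail and `F̄(x-y)/F̄(x) → 1` for every `y`. -/
def LongTailed (μ : Measure ℝ) : Prop :=
  (∀ x : ℝ, 0 < μ (Set.Ioi x)) ∧
  ∀ y : ℝ,
    Tendsto (fun x => (μ (Set.Ioi (x - y))).toReal / (μ (Set.Ioi x)).toReal) atTop (𝓝 1)

/-- `μY` is α-regular-variation determining: for every law `μZ` of a nonnegative random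
variable (taken independent of `Y`, i.e. via the product measure), regular variation with
index `-α` of the law of the product implies that of `μZ`. -/
def IsRVD (μY : Measure ℝ) (α : ℝ) : Prop :=
  ∀ μZ : Measure ℝ, IsProbabilityMeasure μZ → μZ (Set.Iio 0) = 0 →
    RegVary (Measure.map (fun q : ℝ × ℝ => q.1 * q.2) (μY.prod μZ)) α → RegVary μZ α

open NormedSpace

theorem half_pow_floor_div_le (s s₀ : ℝ) :
    (1 / 2 : ℝ) ^ ⌊s / s₀⌋₊ ≤ 2 * Real.exp (-(Real.log 2 / s₀ * s)) := by
  have hfloor : s / s₀ < ⌊s / s₀⌋₊ + 1 := Nat.lt_floor_add_one _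
  have hlog : 0 < Real.log 2 := Real.log_pos one_lt_two
  rw [one_div, inv_pow, ← Real.exp_log (by norm_num : (0 : ℝ) < 2), ← Real.exp_nat_mul,
    ← Real.exp_neg, ← Real.exp_add, Real.exp_log (by norm_num : (0 : ℝ) < 2)]
  refine Real.exp_le_exp.2 ?_
  rw [div_mul_eq_mul_div, mul_div_assoc]
  nlinarith

theorem lintegral_Ioi_ofReal_exp_neg_mul {lam : ℝ} (hlam : 0 < lam) (u : ℝ) :
    ∫⁻ s in Ioi u, ENNReal.ofReal (Real.exp (-(lam * s))) =
      ENNReal.ofReal (Real.exp (-(lam * u)) / lam) := by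
  have hneg : -lam < 0 := neg_neg_of_pos hlam
  simp_rw [← neg_mul]
  rw [← ofReal_integral_eq_lintegral_ofReal (integrableOn_exp_mul_Ioi hneg u)
    (ae_of_all _ fun s => (Real.exp_pos _).le), integral_exp_mul_Ioi hneg, neg_div_neg_eq]

theorem exists_mul_exp_neg_le_of_tendsto_div {f : ℝ → ℝ} (hf : Antitone f) (hpos : ∀ x, 0 < f x)
    (hlim : Tendsto (fun x => f (x - 1) / f x) atTop (𝓝 1)) {δ : ℝ} (hδ : 0 < δ) :
    ∃ c, 0 < c ∧ ∀ u, 0 ≤ u → c * Real.exp (-(δ * u)) ≤ f u := by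
  obtain ⟨x₀, hx₀⟩ := ((hlim.eventually_lt_const (Real.one_lt_exp_iff.2 hδ)).and
    (eventually_ge_atTop 0)).exists_forall_of_atTop
  have hstep : ∀ x, x₀ ≤ x → Real.exp (-δ) * f (x - 1) ≤ f x := fun x hx => by
    have := (div_lt_iff₀ (hpos x)).1 (hx₀ x hx).1
    rw [Real.exp_neg, inv_mul_le_iff₀ (Real.exp_pos δ)]
    linarith
  have hiter : ∀ k : ℕ, ∀ u, u ≤ x₀ + k → f x₀ * Real.exp (-(δ * k)) ≤ f u := by
    intro k
    induction k with
    | zero => intro u hu; simpa using hf (by simpa using hu)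
    | succ k ih =>
      intro u hu
      rcases le_or_gt u x₀ with hux | hux
      · calc f x₀ * Real.exp (-(δ * (k + 1 : ℕ))) ≤ f x₀ :=
              mul_le_of_le_one_right (hpos x₀).le (Real.exp_le_one_iff.2 (by
                have : 0 ≤ δ * (k + 1 : ℕ) := by positivity
                linarith))
          _ ≤ f u := hf hux
      · calc f x₀ * Real.exp (-(δ * (k + 1 : ℕ)))
            = Real.exp (-δ) * (f x₀ * Real.exp (-(δ * k))) := by
              push_cast; rw [mul_left_comm, ← Real.exp_add]; ring_nf
          _ ≤ Real.exp (-δ) * f (u - 1) := by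
              gcongr; exact ih _ (by push_cast at hu; linarith)
          _ ≤ f u := hstep u hux.le
  refine ⟨f x₀ * Real.exp (-δ), mul_pos (hpos x₀) (Real.exp_pos _), fun u hu => ?_⟩
  have hceil : (⌈u⌉₊ : ℝ) < u + 1 := Nat.ceil_lt_add_one hu
  calc f x₀ * Real.exp (-δ) * Real.exp (-(δ * u)) ≤ f x₀ * Real.exp (-(δ * ⌈u⌉₊)) := by
        rw [mul_assoc, ← Real.exp_add]
        exact mul_le_mul_of_nonneg_left (Real.exp_le_exp.2 (by nlinarith)) (hpos x₀).le
    _ ≤ f u := hiter _ u (by linarith [Nat.le_ceil u, (hx₀ x₀ le_rfl).2])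

namespace Matrix

attribute [local instance] Matrix.linftyOpNormedRing Matrix.linftyOpNormedAlgebra

variable {m n : Type*} [Fintype n]

theorem mulVec_mono_of_nonneg {A : Matrix m n ℝ} (hA : ∀ i j, 0 ≤ A i j) {v w : n → ℝ}
    (h : v ≤ w) : A *ᵥ v ≤ A *ᵥ w :=
  fun i => Finset.sum_le_sum fun j _ => mul_le_mul_of_nonneg_left (h j) (hA i j)

variable [DecidableEq n]

theorem hasSum_exp_apply (A : Matrix n n ℝ) (i j : n) :
    HasSum (fun k : ℕ => ((k.factorial⁻¹ : ℝ) • A ^ k) i j) (exp A i j) :=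
  Pi.hasSum.1 (Pi.hasSum.1 (exp_series_hasSum_exp' (𝕂 := ℝ) A) i) j

theorem exp_add_smul (T : Matrix n n ℝ) (a b : ℝ) :
    exp ((a + b) • T) = exp (a • T) * exp (b • T) := by
  rw [add_smul, exp_add_of_commute _ _ ((Commute.refl T).smul_left a |>.smul_right b)]

theorem exp_smul_eq_exp_smul_add_smul_one (T : Matrix n n ℝ) (s c : ℝ) :
    exp (s • T) = Real.exp (-(s * c)) • exp (s • (T + c • 1)) := by
  have hcomm : Commute (s • (T + c • 1)) ((-(s * c)) • (1 : Matrix n n ℝ)) :=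
    (Commute.one_right _).smul_right _
  have hsplit : s • T = s • (T + c • 1) + (-(s * c)) • (1 : Matrix n n ℝ) := by
    module
  have hscalar : exp ((-(s * c)) • (1 : Matrix n n ℝ)) = Real.exp (-(s * c)) • 1 := by
    rw [smul_one_eq_diagonal, exp_diagonal, smul_one_eq_diagonal]
    congr 1
    funext i
    rw [Pi.coe_exp, Real.exp_eq_exp_ℝ]
  rw [hsplit, exp_add_of_commute _ _ hcomm, hscalar, mul_smul_one]

variable {A T : Matrix n n ℝ}

theorem sum_pow_apply_le (hA : ∀ i j, 0 ≤ A i j) {r : ℝ} (hr : 0 ≤ r)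
    (hrow : ∀ i, ∑ j, A i j ≤ r) (k : ℕ) (i : n) : ∑ j, (A ^ k) i j ≤ r ^ k := by
  induction k generalizing i with
  | zero => simp [one_apply]
  | succ k ih =>
    calc ∑ j, (A ^ (k + 1)) i j = ∑ l, A i l * ∑ j, (A ^ k) l j := by
          simp_rw [pow_succ', mul_apply, Finset.mul_sum]
          exact Finset.sum_comm
      _ ≤ ∑ l, A i l * r ^ k :=
          Finset.sum_le_sum fun l _ => mul_le_mul_of_nonneg_left (ih l) (hA i l)
      _ ≤ r ^ (k + 1) := by
          rw [← Finset.sum_mul, pow_succ']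
          exact mul_le_mul_of_nonneg_right (hrow i) (pow_nonneg hr k)

theorem exp_apply_nonneg (hA : ∀ i j, 0 ≤ A i j) (i j : n) : 0 ≤ exp A i j :=
  (hasSum_exp_apply A i j).nonneg fun k => by
    simpa using mul_nonneg (by positivity) (pow_apply_nonneg hA k i j)

theorem sum_exp_apply_le (hA : ∀ i j, 0 ≤ A i j) {r : ℝ} (hr : 0 ≤ r)
    (hrow : ∀ i, ∑ j, A i j ≤ r) (i : n) : ∑ j, exp A i j ≤ Real.exp r := by
  have hrows : HasSum (fun k : ℕ => (k.factorial⁻¹ : ℝ) * ∑ j, (A ^ k) i j) (∑ j, exp A i j) := by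
    simpa [Finset.mul_sum] using hasSum_sum fun j _ => hasSum_exp_apply A i j
  have hexp : HasSum (fun k : ℕ => (k.factorial⁻¹ : ℝ) * r ^ k) (Real.exp r) := by
    simpa [Real.exp_eq_exp_ℝ] using exp_series_hasSum_exp' (𝕂 := ℝ) r
  exact hasSum_le (fun k => mul_le_mul_of_nonneg_left (sum_pow_apply_le hA hr hrow k i)
    (by positivity)) hrows hexp

theorem exists_add_smul_one_nonneg (hT : ∀ i j, i ≠ j → 0 ≤ T i j) :
    ∃ c : ℝ, 0 ≤ c ∧ ∀ i j, 0 ≤ (T + c • 1) i j := by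
  refine ⟨∑ k, |T k k|, Finset.sum_nonneg fun k _ => abs_nonneg _, fun i j => ?_⟩
  rcases eq_or_ne i j with rfl | hij
  · have := Finset.single_le_sum (fun k _ => abs_nonneg (T k k)) (Finset.mem_univ i)
    simp only [add_apply, smul_apply, one_apply_eq, smul_eq_mul, mul_one]
    linarith [neg_abs_le (T i i)]
  · simpa [one_apply_ne hij] using hT i j hij

theorem exp_smul_apply_nonneg (hT : ∀ i j, i ≠ j → 0 ≤ T i j) {s : ℝ} (hs : 0 ≤ s)
    (i j : n) : 0 ≤ exp (s • T) i j := by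
  obtain ⟨c, -, hc⟩ := exists_add_smul_one_nonneg hT
  rw [exp_smul_eq_exp_smul_add_smul_one T s c, smul_apply, smul_eq_mul]
  exact mul_nonneg (Real.exp_nonneg _)
    (exp_apply_nonneg (fun i j => by simpa using mul_nonneg hs (hc i j)) i j)

theorem sum_exp_smul_apply_le_one (hT : ∀ i j, i ≠ j → 0 ≤ T i j)
    (hrow : ∀ i, ∑ j, T i j ≤ 0) {s : ℝ} (hs : 0 ≤ s) (i : n) : ∑ j, exp (s • T) i j ≤ 1 := by
  obtain ⟨c, hc0, hc⟩ := exists_add_smul_one_nonneg hT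
  have hrow' : ∀ i, ∑ j, (s • (T + c • 1)) i j ≤ s * c := fun i => by
    simp only [smul_apply, add_apply, one_apply, smul_eq_mul, mul_ite, mul_one, mul_zero,
      mul_add, Finset.sum_add_distrib, Finset.sum_ite_eq, Finset.mem_univ, ↓reduceIte]
    nlinarith [hrow i, Finset.mul_sum Finset.univ (fun j => T i j) s]
  have hle := sum_exp_apply_le (fun i j => by simpa using mul_nonneg hs (hc i j))
    (mul_nonneg hs hc0) hrow' i
  rw [exp_smul_eq_exp_smul_add_smul_one T s c]
  simp only [smul_apply, smul_eq_mul, ← Finset.mul_sum]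
  calc Real.exp (-(s * c)) * ∑ j, exp (s • (T + c • 1)) i j
      ≤ Real.exp (-(s * c)) * Real.exp (s * c) := by gcongr
    _ = 1 := by rw [← Real.exp_add, neg_add_cancel, Real.exp_zero]

theorem det_ne_zero_of_forall_spectrum_re_neg
    (heig : ∀ z ∈ spectrum ℂ (T.map (algebraMap ℝ ℂ)), z.re < 0) : T.det ≠ 0 := by
  intro hdet
  have hdetC : (T.map (algebraMap ℝ ℂ)).det = 0 := by
    rw [← RingHom.mapMatrix_apply, ← RingHom.map_det, hdet, map_zero]
  have h0 : (0 : ℂ) ∈ spectrum ℂ (T.map (algebraMap ℝ ℂ)) := by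
    rw [spectrum.zero_mem_iff, isUnit_iff_isUnit_det, hdetC]
    exact not_isUnit_zero
  simpa using heig 0 h0

theorem mulVec_eq_zero_of_exp_smul_mulVec_eq {w : n → ℝ}
    (hw : ∀ s : ℝ, 0 < s → exp (s • T) *ᵥ w = w) : T *ᵥ w = 0 := by
  let L : Matrix n n ℝ →ₗ[ℝ] n → ℝ :=
    { toFun := fun M => M *ᵥ w
      map_add' := fun M N => add_mulVec M N w
      map_smul' := fun c M => smul_mulVec c M w }
  have hderiv : HasDerivAt (fun s : ℝ => exp (s • T) *ᵥ w) (T *ᵥ w) (1 : ℝ) := by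
    have hval : L.toContinuousLinearMap (T * exp ((1 : ℝ) • T)) = T *ᵥ w := by
      change (T * exp ((1 : ℝ) • T)) *ᵥ w = T *ᵥ w
      rw [← mulVec_mulVec, hw 1 one_pos]
    exact hval ▸ L.toContinuousLinearMap.hasFDerivAt.comp_hasDerivAt (1 : ℝ)
      (hasDerivAt_exp_smul_const' (𝕂 := ℝ) T (1 : ℝ))
  have hconst : (fun s : ℝ => exp (s • T) *ᵥ w) =ᶠ[𝓝 (1 : ℝ)] fun _ => w := by
    filter_upwards [Ioi_mem_nhds (one_pos : (0 : ℝ) < 1)] with s hs using hw s hs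
  exact hderiv.unique ((hasDerivAt_const (1 : ℝ) w).congr_of_eventuallyEq hconst)

theorem exp_add_smul_mulVec (T : Matrix n n ℝ) (a b : ℝ) (v : n → ℝ) :
    exp ((a + b) • T) *ᵥ v = exp (a • T) *ᵥ (exp (b • T) *ᵥ v) := by
  rw [exp_add_smul, mulVec_mulVec]

theorem exp_smul_mulVec_nonneg (hT : ∀ i j, i ≠ j → 0 ≤ T i j) {s : ℝ} (hs : 0 ≤ s)
    {v : n → ℝ} (hv : 0 ≤ v) : 0 ≤ exp (s • T) *ᵥ v := by
  simpa using mulVec_mono_of_nonneg (exp_smul_apply_nonneg hT hs) hv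

theorem exp_smul_mulVec_one_le_one (hT : ∀ i j, i ≠ j → 0 ≤ T i j)
    (hrow : ∀ i, ∑ j, T i j ≤ 0) {s : ℝ} (hs : 0 ≤ s) : exp (s • T) *ᵥ 1 ≤ 1 := fun i => by
  simpa [mulVec, dotProduct] using sum_exp_smul_apply_le_one hT hrow hs i

theorem exp_smul_mulVec_one_anti (hT : ∀ i j, i ≠ j → 0 ≤ T i j)
    (hrow : ∀ i, ∑ j, T i j ≤ 0) {a b : ℝ} (ha : 0 ≤ a) (hab : a ≤ b) :
    exp (b • T) *ᵥ 1 ≤ exp (a • T) *ᵥ 1 := by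
  rw [show b = a + (b - a) by ring, exp_add_smul_mulVec]
  exact mulVec_mono_of_nonneg (exp_smul_apply_nonneg hT ha)
    (exp_smul_mulVec_one_le_one hT hrow (sub_nonneg.2 hab))

theorem tendsto_exp_smul_mulVec_one (hT : ∀ i j, i ≠ j → 0 ≤ T i j)
    (hrow : ∀ i, ∑ j, T i j ≤ 0) (hdet : T.det ≠ 0) :
    Tendsto (fun s : ℝ => exp (s • T) *ᵥ 1) atTop (𝓝 0) := by
  set g : ℝ → n → ℝ := fun s => exp (max s 0 • T) *ᵥ 1
  have hanti : Antitone g := fun a b hab =>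
    exp_smul_mulVec_one_anti hT hrow (le_max_right a 0) (max_le_max_right 0 hab)
  have hbdd : BddBelow (range g) := ⟨0, by
    rintro _ ⟨s, rfl⟩
    exact exp_smul_mulVec_nonneg hT (le_max_right s 0) zero_le_one⟩
  set w := ⨅ s, g s
  have hlim : Tendsto (fun s : ℝ => exp (s • T) *ᵥ 1) atTop (𝓝 w) :=
    (tendsto_atTop_ciInf hanti hbdd).congr' <| by
      filter_upwards [eventually_ge_atTop 0] with s hs
      simp only [g, max_eq_left hs]
  have hfix : ∀ s : ℝ, 0 < s → exp (s • T) *ᵥ w = w := fun s _ => by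
    refine tendsto_nhds_unique ?_ (hlim.comp (tendsto_atTop_add_const_left _ s tendsto_id))
    refine (((continuous_const.matrix_mulVec continuous_id).tendsto w).comp hlim).congr fun t => ?_
    simp [exp_add_smul_mulVec]
  rwa [eq_zero_of_mulVec_eq_zero hdet (mulVec_eq_zero_of_exp_smul_mulVec_eq hfix)] at hlim

theorem exists_sum_exp_smul_apply_le (hT : ∀ i j, i ≠ j → 0 ≤ T i j)
    (hrow : ∀ i, ∑ j, T i j ≤ 0) (heig : ∀ z ∈ spectrum ℂ (T.map (algebraMap ℝ ℂ)), z.re < 0) :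
    ∃ lam : ℝ, 0 < lam ∧ ∀ s : ℝ, 0 ≤ s → ∀ i,
      ∑ j, exp (s • T) i j ≤ 2 * Real.exp (-(lam * s)) := by
  have hlim := tendsto_exp_smul_mulVec_one hT hrow (det_ne_zero_of_forall_spectrum_re_neg heig)
  obtain ⟨s₀, hhalf, hs₀⟩ : ∃ s₀ : ℝ, (∀ i, (exp (s₀ • T) *ᵥ 1) i ≤ 1 / 2) ∧ 0 < s₀ :=
    ((eventually_all.2 fun i => (tendsto_pi_nhds.1 hlim i).eventually_le_const
      (by norm_num)).and (eventually_gt_atTop 0)).exists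
  have hiter : ∀ k : ℕ, exp ((k * s₀) • T) *ᵥ 1 ≤ (1 / 2 : ℝ) ^ k • 1 := by
    intro k
    induction k with
    | zero => simp
    | succ k ih =>
      calc exp ((((k + 1 : ℕ) : ℝ) * s₀) • T) *ᵥ 1
          = exp ((k * s₀) • T) *ᵥ (exp (s₀ • T) *ᵥ 1) := by
            rw [← exp_add_smul_mulVec]; push_cast; ring_nf
        _ ≤ exp ((k * s₀) • T) *ᵥ ((1 / 2 : ℝ) • 1) :=
            mulVec_mono_of_nonneg (exp_smul_apply_nonneg hT (by positivity))
              fun i => by simpa using hhalf i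
        _ = (1 / 2 : ℝ) • (exp ((k * s₀) • T) *ᵥ 1) := mulVec_smul _ _ _
        _ ≤ (1 / 2 : ℝ) • ((1 / 2 : ℝ) ^ k • 1) := smul_le_smul_of_nonneg_left ih (by norm_num)
        _ = (1 / 2 : ℝ) ^ (k + 1) • 1 := by rw [smul_smul, pow_succ']
  refine ⟨Real.log 2 / s₀, by positivity, fun s hs i => ?_⟩
  have hk : (⌊s / s₀⌋₊ : ℝ) * s₀ ≤ s := (le_div_iff₀ hs₀).1 (Nat.floor_le (by positivity))
  calc ∑ j, exp (s • T) i j = (exp (s • T) *ᵥ 1) i := by simp [mulVec, dotProduct]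
    _ ≤ (exp ((⌊s / s₀⌋₊ * s₀) • T) *ᵥ 1) i :=
        exp_smul_mulVec_one_anti hT hrow (by positivity) hk i
    _ ≤ (1 / 2) ^ ⌊s / s₀⌋₊ := by simpa using hiter _ i
    _ ≤ 2 * Real.exp (-(Real.log 2 / s₀ * s)) := half_pow_floor_div_le s s₀

end Matrix

theorem phDens_le {p : ℕ} {piv : Fin p → ℝ} {T : Matrix (Fin p) (Fin p) ℝ}
    (hPH : IsPHRepr piv T) {s : ℝ} (hs : 0 ≤ s) {b : ℝ}
    (hb : ∀ i, ∑ j, exp (s • T) i j ≤ b) : phDens piv T s ≤ b * ∑ j, -∑ k, T j k := by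
  have hexit : ∀ j, 0 ≤ -∑ k, T j k := fun j => neg_nonneg.2 (hPH.rowsum_nonpos j)
  have hexit_le : ∀ j, -∑ k, T j k ≤ ∑ j, -∑ k, T j k := fun j =>
    Finset.single_le_sum (fun j _ => hexit j) (Finset.mem_univ j)
  calc phDens piv T s ≤ ∑ i, piv i * (∑ j, exp (s • T) i j) * ∑ j, -∑ k, T j k := by
        refine Finset.sum_le_sum fun i _ => ?_
        refine (Finset.sum_le_sum fun j _ => mul_le_mul_of_nonneg_left (hexit_le j) ?_).trans_eq ?_
        · exact mul_nonneg (hPH.pi_nonneg i)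
            (Matrix.exp_smul_apply_nonneg hPH.offdiag_nonneg hs i j)
        · rw [← Finset.sum_mul, ← Finset.mul_sum]
    _ ≤ ∑ i, piv i * b * ∑ j, -∑ k, T j k := by
        gcongr with i
        · exact Finset.sum_nonneg fun j _ => hexit j
        · exact hPH.pi_nonneg i
        · exact hb i
    _ = b * ∑ j, -∑ k, T j k := by rw [← Finset.sum_mul, ← Finset.sum_mul, hPH.pi_sum_one, one_mul]

theorem phMeasure_Iic_zero {p : ℕ} (piv : Fin p → ℝ) (T : Matrix (Fin p) (Fin p) ℝ) :
    phMeasure piv T (Iic 0) = 0 := by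
  rw [phMeasure, withDensity_apply _ measurableSet_Iic]
  exact setLIntegral_eq_zero measurableSet_Iic fun y hy => if_neg (not_lt.2 hy)

theorem exists_phMeasure_Ioi_le {p : ℕ} {piv : Fin p → ℝ} {T : Matrix (Fin p) (Fin p) ℝ}
    (hPH : IsPHRepr piv T) : ∃ lam C : ℝ, 0 < lam ∧ ∀ u, 0 ≤ u →
      phMeasure piv T (Ioi u) ≤ ENNReal.ofReal (C * Real.exp (-(lam * u))) := by
  obtain ⟨lam, hlam, hdecay⟩ :=
    Matrix.exists_sum_exp_smul_apply_le hPH.offdiag_nonneg hPH.rowsum_nonpos hPH.eig_neg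
  set K := 2 * ∑ j, -∑ k, T j k
  have hK : 0 ≤ K := mul_nonneg zero_le_two
    (Finset.sum_nonneg fun j _ => neg_nonneg.2 (hPH.rowsum_nonpos j))
  refine ⟨lam, K / lam, hlam, fun u hu => ?_⟩
  calc phMeasure piv T (Ioi u)
      ≤ ∫⁻ s in Ioi u, ENNReal.ofReal K * ENNReal.ofReal (Real.exp (-(lam * s))) := by
        rw [phMeasure, withDensity_apply _ measurableSet_Ioi]
        refine setLIntegral_mono' measurableSet_Ioi fun s hs => ?_
        have hs0 : 0 < s := hu.trans_lt hs
        rw [if_pos hs0, ← ENNReal.ofReal_mul hK]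
        refine ENNReal.ofReal_le_ofReal ((phDens_le hPH hs0.le (hdecay s hs0.le)).trans_eq ?_)
        ring
    _ = ENNReal.ofReal (K / lam * Real.exp (-(lam * u))) := by
        rw [lintegral_const_mul _ (by fun_prop), lintegral_Ioi_ofReal_exp_neg_mul hlam,
          ← ENNReal.ofReal_mul hK]
        ring_nf

theorem LongTailed.exists_mul_exp_neg_le {μ : Measure ℝ} [IsFiniteMeasure μ] (hμ : LongTailed μ)
    {δ : ℝ} (hδ : 0 < δ) :
    ∃ c, 0 < c ∧ ∀ u, 0 ≤ u → c * Real.exp (-(δ * u)) ≤ (μ (Ioi u)).toReal :=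
  exists_mul_exp_neg_le_of_tendsto_div
    (fun _ _ h => ENNReal.toReal_mono (measure_ne_top μ _) (measure_mono (Ioi_subset_Ioi h)))
    (fun x => ENNReal.toReal_pos (hμ.1 x).ne' (measure_ne_top μ _)) (hμ.2 1) hδ

theorem longTailed_of_eventually_le {ρ : Measure ℝ} [IsFiniteMeasure ρ]
    (hpos : ∀ x, 0 < ρ (Ioi x))
    (h : ∀ y, 0 ≤ y → ∀ ε, 0 < ε →
      ∀ᶠ x in atTop, ρ (Ioi (x - y)) ≤ ENNReal.ofReal (1 + ε) * ρ (Ioi x)) :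
    LongTailed ρ := by
  have htail : ∀ x, 0 < (ρ (Ioi x)).toReal := fun x =>
    ENNReal.toReal_pos (hpos x).ne' (measure_ne_top ρ _)
  have hnonneg : ∀ y, 0 ≤ y →
      Tendsto (fun x => (ρ (Ioi (x - y))).toReal / (ρ (Ioi x)).toReal) atTop (𝓝 1) := by
    intro y hy
    refine tendsto_order.2 ⟨fun a ha => Eventually.of_forall fun x => ?_, fun b hb => ?_⟩
    · refine ha.trans_le ((one_le_div (htail x)).2 (ENNReal.toReal_mono (measure_ne_top ρ _)
        (measure_mono (Ioi_subset_Ioi (sub_le_self x hy)))))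
    · filter_upwards [h y hy ((b - 1) / 2) (by linarith)] with x hx
      rw [div_lt_iff₀ (htail x)]
      have := ENNReal.toReal_mono (by finiteness) hx
      rw [ENNReal.toReal_mul, ENNReal.toReal_ofReal (by linarith)] at this
      nlinarith [htail x]
  refine ⟨hpos, fun y => ?_⟩
  rcases le_or_gt 0 y with hy | hy
  · exact hnonneg y hy
  · have := ((hnonneg (-y) (by linarith)).comp
      (tendsto_atTop_add_const_right _ (-y) tendsto_id)).inv₀ one_ne_zero
    rw [inv_one] at this
    refine this.congr fun x => ?_
    simp only [Function.comp_apply, id, inv_div]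
    ring_nf

theorem tendsto_measure_Ioc_nhdsGT (ν : Measure ℝ) [IsFiniteMeasure ν] (a : ℝ) :
    Tendsto (fun σ => ν (Ioc a σ)) (𝓝[>] a) (𝓝 0) := by
  have hempty : ⋂ r > a, Ioc a r = ∅ := by
    ext x
    simp only [mem_iInter, mem_Ioc, mem_empty_iff_false, iff_false, not_forall]
    rcases le_or_gt x a with hx | hx
    · exact ⟨a + 1, by linarith, fun h => hx.not_gt h.1⟩
    · exact ⟨(a + x) / 2, by linarith, fun h => by linarith [h.2]⟩
  simpa [hempty, Function.comp_def] using
    tendsto_measure_biInter_gt (μ := ν) (s := fun σ => Ioc a σ) (a := a)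
    (fun r _ => nullMeasurableSet_Ioc) (fun i j _ hij => Ioc_subset_Ioc_right hij)
    ⟨a + 1, by linarith, measure_ne_top ν _⟩

theorem exists_pos_measure_Ioi {ν : Measure ℝ} [IsFiniteMeasure ν] [NeZero ν]
    (hν : ν (Iic 0) = 0) : ∃ m, 0 < m ∧ 0 < ν (Ioi m) := by
  have hIoi : ν (Ioi 0) = ν univ := by
    rw [← measure_add_measure_compl measurableSet_Iic, compl_Iic, hν, zero_add]
  have hlt : ∀ᶠ σ in 𝓝[>] (0 : ℝ), ν (Ioc 0 σ) < ν (Ioi 0) :=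
    (tendsto_measure_Ioc_nhdsGT ν 0).eventually_lt_const
      (by rw [hIoi]; exact Measure.measure_univ_pos.2 (NeZero.ne ν))
  obtain ⟨m, hm, hm0⟩ := (hlt.and self_mem_nhdsWithin).exists
  refine ⟨m, hm0, pos_iff_ne_zero.2 fun h => hm.not_ge ?_⟩
  calc ν (Ioi 0) ≤ ν (Ioc 0 m) + ν (Ioi m) := by
        rw [← Ioc_union_Ioi_eq_Ioi hm0.le]; exact measure_union_le _ _
    _ = ν (Ioc 0 m) := by rw [h, add_zero]

theorem map_mul_prod_Ioi {μ ν : Measure ℝ} [SFinite μ] [SFinite ν] (hν : ν (Iic 0) = 0)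
    (z : ℝ) : (μ.prod ν).map (fun q => q.1 * q.2) (Ioi z) = ∫⁻ t, μ (Ioi (z / t)) ∂ν := by
  have hmeas : Measurable fun q : ℝ × ℝ => q.1 * q.2 := measurable_fst.mul measurable_snd
  rw [Measure.map_apply hmeas measurableSet_Ioi, Measure.prod_apply_symm (hmeas measurableSet_Ioi)]
  have hpos : ∀ᵐ t ∂ν, 0 < t := by
    rw [ae_iff]
    simp only [not_lt]
    exact hν
  refine lintegral_congr_ae (hpos.mono fun t ht => congrArg μ ?_)
  ext v
  simp [div_lt_iff₀ ht]

theorem mul_measure_Ioi_le_lintegral {μ ν : Measure ℝ} {x m : ℝ} (hx : 0 ≤ x) (hm : 0 < m) :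
    μ (Ioi (x / m)) * ν (Ioi m) ≤ ∫⁻ t, μ (Ioi (x / t)) ∂ν :=
  calc μ (Ioi (x / m)) * ν (Ioi m) = ∫⁻ _ in Ioi m, μ (Ioi (x / m)) ∂ν :=
        (setLIntegral_const _ _).symm
    _ ≤ ∫⁻ t in Ioi m, μ (Ioi (x / t)) ∂ν := setLIntegral_mono' measurableSet_Ioi fun _ ht =>
        measure_mono (Ioi_subset_Ioi (div_le_div_of_nonneg_left hx hm (le_of_lt ht)))
    _ ≤ ∫⁻ t, μ (Ioi (x / t)) ∂ν := setLIntegral_le_lintegral _ _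

theorem lintegral_measure_Ioi_div_le {μ ν : Measure ℝ} [IsProbabilityMeasure μ]
    (hν : ν (Iic 0) = 0) {z σ R : ℝ} (hz : 0 ≤ z) (hσ : 0 < σ) (hσR : σ ≤ R) :
    ∫⁻ t, μ (Ioi (z / t)) ∂ν ≤
      ν (Ioc 0 σ) * μ (Ioi (z / σ)) + ∫⁻ t in Ioc σ R, μ (Ioi (z / t)) ∂ν + ν (Ioi R) := by
  set f := fun t => μ (Ioi (z / t))
  have hcover : ((Iic 0 ∪ Ioc 0 σ) ∪ Ioc σ R) ∪ Ioi R = (univ : Set ℝ) := by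
    rw [Iic_union_Ioc_eq_Iic hσ.le, Iic_union_Ioc_eq_Iic hσR, Iic_union_Ioi]
  have hnear : ∫⁻ t in Ioc 0 σ, f t ∂ν ≤ ν (Ioc 0 σ) * μ (Ioi (z / σ)) := by
    rw [mul_comm, ← setLIntegral_const]
    exact setLIntegral_mono' measurableSet_Ioc fun t ht =>
      measure_mono (Ioi_subset_Ioi (div_le_div_of_nonneg_left hz ht.1 ht.2))
  have hfar : ∫⁻ t in Ioi R, f t ∂ν ≤ ν (Ioi R) := by
    rw [← setLIntegral_one]
    exact setLIntegral_mono' measurableSet_Ioi fun t _ => prob_le_one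
  calc ∫⁻ t, f t ∂ν = ∫⁻ t in ((Iic 0 ∪ Ioc 0 σ) ∪ Ioc σ R) ∪ Ioi R, f t ∂ν := by
        rw [hcover, setLIntegral_univ]
    _ ≤ ((∫⁻ t in Iic 0, f t ∂ν + ∫⁻ t in Ioc 0 σ, f t ∂ν) + ∫⁻ t in Ioc σ R, f t ∂ν)
          + ∫⁻ t in Ioi R, f t ∂ν := by
        refine (lintegral_union_le _ _ _).trans (add_le_add_left ?_ _)
        exact (lintegral_union_le _ _ _).trans (add_le_add_left (lintegral_union_le _ _ _) _)
    _ ≤ _ := by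
        rw [setLIntegral_measure_zero _ _ hν, zero_add]
        gcongr

theorem LongTailed.exists_measure_Ioi_div_le {μ : Measure ℝ} [IsFiniteMeasure μ]
    (hμ : LongTailed μ) {y σ ε : ℝ} (hy : 0 ≤ y) (hσ : 0 < σ) (hε : 0 < ε) :
    ∃ x₀, 0 < x₀ ∧ ∀ x t, σ < t → t ≤ x / x₀ →
      μ (Ioi ((x - y) / t)) ≤ ENNReal.ofReal (1 + ε) * μ (Ioi (x / t)) := by
  obtain ⟨x₁, hx₁⟩ := ((hμ.2 (y / σ)).eventually_lt_const
    (lt_add_of_pos_right 1 hε)).exists_forall_of_atTop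
  refine ⟨max x₁ 1, by positivity, fun x t hσt htx => ?_⟩
  have ht : 0 < t := hσ.trans hσt
  have hu : x₁ ≤ x / t := by
    rw [le_div_iff₀ (by positivity), mul_comm] at htx
    exact (le_max_left _ _).trans ((le_div_iff₀ ht).2 htx)
  have hpos := ENNReal.toReal_pos (hμ.1 (x / t)).ne' (measure_ne_top μ _)
  have hratio := ((div_lt_iff₀ hpos).1 (hx₁ _ hu)).le
  calc μ (Ioi ((x - y) / t)) ≤ μ (Ioi (x / t - y / σ)) := by
        refine measure_mono (Ioi_subset_Ioi ?_)
        rw [sub_div]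
        gcongr
    _ ≤ ENNReal.ofReal (1 + ε) * μ (Ioi (x / t)) := by
        rw [← ENNReal.ofReal_toReal (measure_ne_top μ (Ioi (x / t - y / σ))),
          ← ENNReal.ofReal_toReal (measure_ne_top μ (Ioi (x / t))),
          ← ENNReal.ofReal_mul (by linarith)]
        exact ENNReal.ofReal_le_ofReal hratio

theorem LongTailed.eventually_measure_Ioi_div_le {μ ν : Measure ℝ} [IsFiniteMeasure μ]
    (hμ : LongTailed μ) {lam C : ℝ} (hlam : 0 < lam)
    (hν : ∀ u, 0 ≤ u → ν (Ioi u) ≤ ENNReal.ofReal (C * Real.exp (-(lam * u))))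
    {a b : ℝ} (ha : 0 < a) (hb : 0 < b) {K : ℝ≥0∞} (hK0 : K ≠ 0) (hK : K ≠ ⊤) :
    ∀ᶠ x in atTop, ν (Ioi (x / a)) ≤ K * μ (Ioi (x / b)) := by
  obtain ⟨c, hc, hlow⟩ := hμ.exists_mul_exp_neg_le (δ := lam * b / (2 * a)) (by positivity)
  have hK' : 0 < K.toReal := ENNReal.toReal_pos hK0 hK
  have hgrow : Tendsto (fun x => Real.exp (lam / (2 * a) * x)) atTop atTop :=
    Real.tendsto_exp_atTop.comp (tendsto_id.const_mul_atTop (by positivity))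
  filter_upwards [hgrow.eventually_ge_atTop (C / (K.toReal * c)), eventually_ge_atTop 0]
    with x hx hx0
  set v := lam / (2 * a) * x
  have hv₁ : lam * (x / a) = v + v := by simp only [v]; field_simp; ring
  have hv₂ : lam * b / (2 * a) * (x / b) = v := by simp only [v]; field_simp
  have hC : C ≤ K.toReal * c * Real.exp v := by
    rwa [div_le_iff₀ (by positivity), mul_comm] at hx
  calc ν (Ioi (x / a)) ≤ ENNReal.ofReal (C * Real.exp (-(lam * (x / a)))) := hν _ (by positivity)
    _ ≤ ENNReal.ofReal (K.toReal * (c * Real.exp (-v))) := by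
        refine ENNReal.ofReal_le_ofReal ?_
        rw [hv₁, neg_add, Real.exp_add]
        calc C * (Real.exp (-v) * Real.exp (-v))
            ≤ K.toReal * c * Real.exp v * (Real.exp (-v) * Real.exp (-v)) := by gcongr
          _ = K.toReal * (c * Real.exp (-v)) := by
            rw [← mul_assoc, mul_assoc _ (Real.exp v), ← Real.exp_add, add_neg_cancel,
              Real.exp_zero, mul_one, mul_assoc]
    _ ≤ K * μ (Ioi (x / b)) := by
        rw [ENNReal.ofReal_mul hK'.le, ENNReal.ofReal_toReal hK]
        gcongr
        rw [← hv₂]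
        exact ENNReal.ofReal_le_of_le_toReal (hlow _ (by positivity))

theorem longTailed_map_mul_prod {μ ν : Measure ℝ} [IsProbabilityMeasure μ]
    [IsProbabilityMeasure ν] (hμ : LongTailed μ) (hν0 : ν (Iic 0) = 0) {lam C : ℝ}
    (hlam : 0 < lam) (hν : ∀ u, 0 ≤ u → ν (Ioi u) ≤ ENNReal.ofReal (C * Real.exp (-(lam * u)))) :
    LongTailed ((μ.prod ν).map fun q => q.1 * q.2) := by
  obtain ⟨m, hm, hQ⟩ := exists_pos_measure_Ioi hν0
  set Q := ν (Ioi m)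
  have hH := map_mul_prod_Ioi (μ := μ) hν0
  have hlow : ∀ x, 0 ≤ x → μ (Ioi (x / m)) * Q ≤ ∫⁻ t, μ (Ioi (x / t)) ∂ν := fun x hx =>
    mul_measure_Ioi_le_lintegral hx hm
  refine longTailed_of_eventually_le (fun x => ?_) fun y hy ε hε => ?_
  · calc 0 < μ (Ioi (max x 0 / m)) * Q := ENNReal.mul_pos (hμ.1 _).ne' hQ.ne'
      _ ≤ _ := (hlow _ (le_max_right x 0)).trans_eq (hH _).symm
      _ ≤ _ := measure_mono (Ioi_subset_Ioi (le_max_left x 0))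
  set K := ENNReal.ofReal (ε / 3) * Q
  have hK0 : K ≠ 0 := mul_ne_zero (ENNReal.ofReal_pos.2 (by positivity)).ne' hQ.ne'
  have hKtop : K ≠ ⊤ := ENNReal.mul_ne_top ENNReal.ofReal_ne_top (measure_ne_top ν _)
  obtain ⟨σ, hσν, hσ, hσm⟩ := (((tendsto_measure_Ioc_nhdsGT ν 0).eventually_lt_const
    (pos_iff_ne_zero.2 hK0)).and (Ioc_mem_nhdsGT (half_pos hm))).exists
  obtain ⟨x₀, hx₀, hmid⟩ := hμ.exists_measure_Ioi_div_le hy hσ (ε := ε / 3) (by positivity)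
  filter_upwards [hμ.eventually_measure_Ioi_div_le hlam hν hx₀ hm hK0 hKtop,
    eventually_ge_atTop (2 * y), eventually_ge_atTop (σ * x₀)] with x hfar hxy hxσ
  have hx : 0 ≤ x := (by positivity : 0 ≤ σ * x₀).trans hxσ
  have hnear : ν (Ioc 0 σ) * μ (Ioi ((x - y) / σ)) ≤
      ENNReal.ofReal (ε / 3) * ∫⁻ t, μ (Ioi (x / t)) ∂ν :=
    calc ν (Ioc 0 σ) * μ (Ioi ((x - y) / σ)) ≤ K * μ (Ioi (x / m)) := by
          refine mul_le_mul' hσν.le (measure_mono (Ioi_subset_Ioi ?_))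
          rw [div_le_div_iff₀ hm hσ]
          nlinarith [mul_le_mul_of_nonneg_left hσm hx]
      _ = ENNReal.ofReal (ε / 3) * (μ (Ioi (x / m)) * Q) := by ring
      _ ≤ _ := by gcongr; exact hlow x hx
  have hmiddle : ∫⁻ t in Ioc σ (x / x₀), μ (Ioi ((x - y) / t)) ∂ν ≤
      ENNReal.ofReal (1 + ε / 3) * ∫⁻ t, μ (Ioi (x / t)) ∂ν :=
    calc ∫⁻ t in Ioc σ (x / x₀), μ (Ioi ((x - y) / t)) ∂ν
        ≤ ∫⁻ t in Ioc σ (x / x₀), ENNReal.ofReal (1 + ε / 3) * μ (Ioi (x / t)) ∂ν :=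
          setLIntegral_mono' measurableSet_Ioc fun t ht => hmid x t ht.1 ht.2
      _ ≤ _ := by
          rw [lintegral_const_mul' _ _ ENNReal.ofReal_ne_top]
          exact mul_le_mul_right (setLIntegral_le_lintegral _ _) _
  have hfar' : ν (Ioi (x / x₀)) ≤ ENNReal.ofReal (ε / 3) * ∫⁻ t, μ (Ioi (x / t)) ∂ν :=
    hfar.trans (by rw [mul_assoc, mul_comm Q]; gcongr; exact hlow x hx)
  rw [hH, hH]
  calc ∫⁻ t, μ (Ioi ((x - y) / t)) ∂ν
      ≤ _ := lintegral_measure_Ioi_div_le hν0 (by linarith) hσ ((le_div_iff₀ hx₀).2 hxσ)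
    _ ≤ _ := add_le_add (add_le_add hnear hmiddle) hfar'
    _ = ENNReal.ofReal (1 + ε) * ∫⁻ t, μ (Ioi (x / t)) ∂ν := by
        rw [← add_mul, ← add_mul, ← ENNReal.ofReal_add (by positivity) (by positivity),
          ← ENNReal.ofReal_add (by positivity) (by positivity)]
        ring_nf

theorem cph_longTailed_general
    {Ω : Type*} [MeasureSpace Ω] [IsProbabilityMeasure (ℙ : Measure Ω)]
    {p : ℕ} (piv : Fin p → ℝ) (T : Matrix (Fin p) (Fin p) ℝ) (hPH : IsPHRepr piv T)
    (V Y : Ω → ℝ) (hVm : Measurable V) (hYm : Measurable Y)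
    (hInd : IndepFun V Y ℙ)
    (hYlaw : Measure.map Y ℙ = phMeasure piv T)
    (hV : LongTailed (Measure.map V ℙ)) :
    LongTailed (Measure.map (fun ω => V ω * Y ω) ℙ) := by
  have := Measure.isProbabilityMeasure_map (μ := ℙ) hVm.aemeasurable
  have := Measure.isProbabilityMeasure_map (μ := ℙ) hYm.aemeasurable
  have hlaw : Measure.map (fun ω => V ω * Y ω) ℙ =
      ((Measure.map V ℙ).prod (Measure.map Y ℙ)).map fun q => q.1 * q.2 := by
    rw [← (indepFun_iff_map_prod_eq_prod_map_map hVm.aemeasurable hYm.aemeasurable).1 hInd,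
      Measure.map_map (g := fun q : ℝ × ℝ => q.1 * q.2) (by fun_prop) (hVm.prodMk hYm)]
    rfl
  obtain ⟨lam, C, hlam, htail⟩ := exists_phMeasure_Ioi_le hPH
  rw [hlaw]
  exact longTailed_map_mul_prod hV (hYlaw ▸ phMeasure_Iic_zero piv T) hlam (hYlaw ▸ htail)

/-- if `V ≥ 0` has long-tailed law and `Y ~ PH(π,T)` is independent of `V`,
then the law of `VY` is also long-tailed. -/
theorem cph_longTailed
    {Ω : Type*} [MeasureSpace Ω] [IsProbabilityMeasure (ℙ : Measure Ω)]
    {p : ℕ} (piv : Fin p → ℝ) (T : Matrix (Fin p) (Fin p) ℝ) (hPH : IsPHRepr piv T)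
    (V Y : Ω → ℝ) (hVm : Measurable V) (hYm : Measurable Y)
    (hInd : IndepFun V Y ℙ)
    (hVnn : ∀ᵐ ω ∂ℙ, 0 ≤ V ω)
    (hYlaw : Measure.map Y ℙ = phMeasure piv T)
    (hV : LongTailed (Measure.map V ℙ)) :
    LongTailed (Measure.map (fun ω => V ω * Y ω) ℙ) :=
  cph_longTailed_general piv T hPH V Y hVm hYm hInd hYlaw hV
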